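/- For all A, B ∈ GL_n(K) and every 1 ≤ l ≤ n: Σ_{i=n−l+1}^n μ(AB)_i ≥ Σ_{i=n−l+1}^n μ(A)_i + Σ_{i=n−l+1}^n μ(B)_i, with equality for l = n. (Equivalently, in the dominance order on decreasing tuples, μ(AB) ≼ μ(A) ⊕ μ(B), where ⊕ is entrywise addition of the decreasing representatives.) -/

import Mathlib

/-!
Statement 6.  For `A, B ∈ GL_n(K)` and `1 ≤ l ≤ n`:
`Σ_{i=n−l+1}^n μ(AB)_i ≥ Σ_{i=n−l+1}^n μ(A)_i + Σ_{i=n−l+1}^n μ(B)_i`,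
with equality for `l = n`.  With 0-indexed decreasing tuples, the sum over the
last `l` entries is the sum over indices `i` with `n − l ≤ i`.
-/

open Matrix

noncomputable section

variable (p : ℕ) [Fact p.Prime] (κ : Type) [Field κ] [IsAlgClosed κ] [CharP κ p]

local notation "𝕎" => WittVector p κ
local notation "K" => FractionRing (WittVector p κ)

/-- `c ∈ GL_n(W(κ)) ⊆ GL_n(K)`. -/
def IsIntegralUnit {n : ℕ} (c : Matrix (Fin n) (Fin n) K) : Prop :=
  ∃ d : Matrix (Fin n) (Fin n) 𝕎, IsUnit d.det ∧ c = d.map (algebraMap 𝕎 K)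

/-- `μ` is the Hodge point of `b`. -/
def IsHodgePoint {n : ℕ} (b : Matrix (Fin n) (Fin n) K) (μ : Fin n → ℤ) : Prop :=
  Antitone μ ∧ ∃ c₁ c₂ : Matrix (Fin n) (Fin n) K, IsIntegralUnit p κ c₁ ∧ IsIntegralUnit p κ c₂ ∧
    b = c₁ * Matrix.diagonal (fun i => (p : K) ^ (μ i)) * c₂

/-!
Write `diag(p^μ(AB)) = U · diag(p^μ(A)) · V · diag(p^μ(B)) · W` with `U, V, W` integral.
Expanding determinants row by row, every `l × l` minor of the right-hand side is divisible by
`p^m`, where `m` is the sum of the `l` smallest entries of `μ(A)` plus that of `μ(B)`, while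
the minor of the left-hand side on the last `l` indices is `p` to the sum of the last `l`
entries of `μ(AB)`. The equality for `l = n` compares the valuations of both sides of
`det(AB) = det A · det B`.
-/

open Finset

theorem Finset.sum_le_sum_of_card_eq_of_forall_sdiff_le {ι M : Type*} [DecidableEq ι]
    [AddCommMonoid M] [LinearOrder M] [IsOrderedAddMonoid M] {s t : Finset ι} (f : ι → M)
    (hcard : #s = #t) (h : ∀ i ∈ s \ t, ∀ j ∈ t \ s, f i ≤ f j) :
    ∑ i ∈ s, f i ≤ ∑ i ∈ t, f i := by
  rw [← sum_inter_add_sum_sdiff s t, ← sum_inter_add_sum_sdiff t s, inter_comm]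
  refine add_le_add le_rfl ?_
  obtain hempty | ⟨i, hi⟩ := (s \ t).eq_empty_or_nonempty
  · rw [hempty, card_eq_zero.mp ((card_sdiff_comm hcard).symm.trans (by rw [hempty, card_empty]))]
  · obtain ⟨i₀, hi₀, hmax⟩ := exists_max_image (s \ t) f ⟨i, hi⟩
    calc ∑ i ∈ s \ t, f i ≤ #(s \ t) • f i₀ := sum_le_card_nsmul _ _ _ hmax
      _ = #(t \ s) • f i₀ := by rw [card_sdiff_comm hcard]
      _ ≤ ∑ j ∈ t \ s, f j := card_nsmul_le_sum _ _ _ fun j hj => h i₀ hi₀ j hj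

theorem Antitone.sum_le_sum_comp_of_isUpperSet {ι n M : Type*} [Fintype ι] [DecidableEq n]
    [LinearOrder n] [AddCommMonoid M] [LinearOrder M] [IsOrderedAddMonoid M]
    {α : n → M} (hα : Antitone α) {s : Finset n} (hs : IsUpperSet (s : Set n))
    (hcard : #s = Fintype.card ι) {g : ι → n} (hg : Function.Injective g) :
    ∑ i ∈ s, α i ≤ ∑ i, α (g i) := by
  rw [← sum_image fun _ _ _ _ h => hg h]
  refine sum_le_sum_of_card_eq_of_forall_sdiff_le α ?_ fun i hi j hj => hα ?_
  · rw [card_image_of_injective _ hg, hcard, card_univ]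
  · rw [mem_sdiff] at hi hj
    by_contra! hij
    exact hj.2 (hs hij.le hi.1)

theorem Matrix.det_mul_eq_sum {ι n R : Type*} [Fintype ι] [DecidableEq ι] [Fintype n]
    [CommRing R] (P : Matrix ι n R) (Q : Matrix n ι R) :
    (P * Q).det = ∑ r : ι → n, (∏ i, P i (r i)) * (Q.submatrix r id).det := by
  have hrows : P * Q = of fun i => ∑ k, P i k • Q k := by
    ext i j
    simp [mul_apply, Finset.sum_apply]
  have hsum := (detRowAlternating (R := R) (n := ι)).toMultilinearMap.map_sum
    fun i k => P i k • Q k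
  rw [hrows]
  exact hsum.trans
    (sum_congr rfl fun r _ => det_mul_column (fun i => P i (r i)) (Q.submatrix r id))

theorem Matrix.det_submatrix_eq_zero_of_not_injective {ι n R : Type*} [Fintype ι]
    [DecidableEq ι] [CommRing R] (M : Matrix n n R) {r : ι → n} (hr : ¬Function.Injective r)
    (e : ι → n) : (M.submatrix r e).det = 0 := by
  obtain ⟨i, j, hij, hne⟩ := Function.not_injective_iff.mp hr
  exact det_zero_of_row_eq hne (by ext; simp [hij])

theorem zpow_sum₀ {M₀ ι : Type*} [CommGroupWithZero M₀] {x : M₀} (hx : x ≠ 0) (s : Finset ι)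
    (f : ι → ℤ) : x ^ (∑ i ∈ s, f i) = ∏ i ∈ s, x ^ f i := by
  classical
  induction s using Finset.induction with
  | empty => simp
  | insert i s hi ih => rw [prod_insert hi, sum_insert hi, zpow_add₀ hx, ih]

section ZpowSpan

variable {R F : Type*} [CommRing R] [Field F] [Algebra R F] {ϖ : R}

variable (ϖ) in
/-- For `R = W(k)`, `F = K` and `ϖ = p`: the elements of `p`-adic valuation at least `m`. -/
def zpowSpan (m : ℤ) : Submodule R F :=
  Submodule.span R {algebraMap R F ϖ ^ m}

theorem mem_zpowSpan {m : ℤ} {x : F} :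
    x ∈ zpowSpan ϖ m ↔ ∃ a : R, algebraMap R F a * algebraMap R F ϖ ^ m = x := by
  simp [zpowSpan, Submodule.mem_span_singleton, Algebra.smul_def]

theorem algebraMap_mem_zpowSpan_zero (a : R) : algebraMap R F a ∈ zpowSpan ϖ 0 :=
  mem_zpowSpan.mpr ⟨a, by simp⟩

theorem zpow_mem_zpowSpan (m : ℤ) : algebraMap R F ϖ ^ m ∈ zpowSpan ϖ m :=
  Submodule.mem_span_singleton_self _

theorem mul_mem_zpowSpan (hϖ : algebraMap R F ϖ ≠ 0) {m m' : ℤ} {x y : F}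
    (hx : x ∈ zpowSpan ϖ m) (hy : y ∈ zpowSpan ϖ m') : x * y ∈ zpowSpan ϖ (m + m') := by
  obtain ⟨a, rfl⟩ := mem_zpowSpan.mp hx
  obtain ⟨b, rfl⟩ := mem_zpowSpan.mp hy
  exact mem_zpowSpan.mpr ⟨a * b, by rw [map_mul, zpow_add₀ hϖ]; ring⟩

theorem zpowSpan_anti (hϖ : algebraMap R F ϖ ≠ 0) : Antitone (zpowSpan (F := F) ϖ) := by
  intro m m' hm
  rw [zpowSpan, Submodule.span_le, Set.singleton_subset_iff]
  obtain ⟨k, hk⟩ := Int.eq_ofNat_of_zero_le (sub_nonneg.mpr hm)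
  refine mem_zpowSpan.mpr ⟨ϖ ^ k, ?_⟩
  rw [map_pow, ← zpow_natCast, ← hk, ← zpow_add₀ hϖ, sub_add_cancel]

theorem le_of_zpow_mem_zpowSpan (hϖ : algebraMap R F ϖ ≠ 0)
    (hinj : Function.Injective (algebraMap R F)) (hϖu : ¬IsUnit ϖ) {m t : ℤ}
    (h : algebraMap R F ϖ ^ t ∈ zpowSpan ϖ m) : m ≤ t := by
  by_contra! hlt
  obtain ⟨a, ha⟩ := mem_zpowSpan.mp h
  obtain ⟨k, hk⟩ := Int.eq_ofNat_of_zero_le (sub_nonneg.mpr hlt.le)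
  have hunit : a * ϖ ^ k = 1 := hinj <| by
    rw [map_mul, map_pow, map_one, ← zpow_natCast, ← hk, zpow_sub₀ hϖ, ← mul_div_assoc, ha,
      div_self (zpow_ne_zero t hϖ)]
  exact hϖu ((isUnit_pow_iff (by omega : k ≠ 0)).mp (.of_mul_eq_one_right a hunit))

theorem le_of_algebraMap_mul_zpow_eq (hϖ : algebraMap R F ϖ ≠ 0)
    (hinj : Function.Injective (algebraMap R F)) (hϖu : ¬IsUnit ϖ) {u v : R} (hu : IsUnit u)
    {a b : ℤ}
    (h : algebraMap R F u * algebraMap R F ϖ ^ a = algebraMap R F v * algebraMap R F ϖ ^ b) :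
    b ≤ a := by
  obtain ⟨u, rfl⟩ := hu
  refine le_of_zpow_mem_zpowSpan hϖ hinj hϖu (mem_zpowSpan.mpr ⟨↑u⁻¹ * v, ?_⟩)
  rw [map_mul, mul_assoc, ← h, ← mul_assoc, ← map_mul, Units.inv_mul, map_one, one_mul]

end ZpowSpan

section Minors

variable {R F : Type*} [CommRing R] [Field F] [Algebra R F] {ϖ : R}
  {n ι : Type*} [Fintype ι] [DecidableEq ι]

variable (ϖ ι) in
/-- Rows and columns may repeat, which lets the row expansion of a product stay in the class. -/
def MinorsMem (m : ℤ) (M : Matrix n n F) : Prop :=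
  ∀ r e : ι → n, (M.submatrix r e).det ∈ zpowSpan ϖ m

theorem minorsMem_map_algebraMap (W : Matrix n n R) :
    MinorsMem ϖ ι 0 (W.map (algebraMap R F)) := by
  intro r e
  rw [submatrix_map, ← RingHom.mapMatrix_apply, ← RingHom.map_det]
  exact algebraMap_mem_zpowSpan_zero _

theorem MinorsMem.map_algebraMap_mul [Fintype n] (hϖ : algebraMap R F ϖ ≠ 0) {m : ℤ}
    {N : Matrix n n F} (hN : MinorsMem ϖ ι m N) (U : Matrix n n R) :
    MinorsMem ϖ ι m (U.map (algebraMap R F) * N) := by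
  intro r e
  rw [submatrix_mul _ _ r id e Function.bijective_id, det_mul_eq_sum]
  refine Submodule.sum_mem _ fun s _ => ?_
  have hprod : ∏ i, (U.map (algebraMap R F)).submatrix r id i (s i) ∈ zpowSpan ϖ 0 := by
    simpa [← map_prod] using algebraMap_mem_zpowSpan_zero (F := F) (ϖ := ϖ) (∏ i, U (r i) (s i))
  simpa using mul_mem_zpowSpan hϖ hprod (hN s e)

theorem MinorsMem.diagonal_zpow_mul [Fintype n] [DecidableEq n] (hϖ : algebraMap R F ϖ ≠ 0)
    {α : n → ℤ} {m m' : ℤ} (hα : ∀ g : ι → n, Function.Injective g → m ≤ ∑ i, α (g i))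
    {N : Matrix n n F} (hN : MinorsMem ϖ ι m' N) :
    MinorsMem ϖ ι (m + m') (diagonal (fun i => algebraMap R F ϖ ^ α i) * N) := by
  intro r e
  by_cases hr : Function.Injective r
  · have hrows : (diagonal (fun i => algebraMap R F ϖ ^ α i) * N).submatrix r e =
        of fun i j => algebraMap R F ϖ ^ α (r i) * N.submatrix r e i j := by
      ext i j
      simp [diagonal_mul]
    rw [hrows, det_mul_column, ← zpow_sum₀ hϖ]
    exact mul_mem_zpowSpan hϖ (zpowSpan_anti hϖ (hα r hr) (zpow_mem_zpowSpan _)) (hN r e)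
  · rw [det_submatrix_eq_zero_of_not_injective _ hr]
    exact zero_mem _

theorem sum_add_sum_le_of_diagonal_eq [Fintype n] [DecidableEq n] [LinearOrder n]
    (hϖ : algebraMap R F ϖ ≠ 0) (hinj : Function.Injective (algebraMap R F)) (hϖu : ¬IsUnit ϖ)
    {α β γ : n → ℤ} (hα : Antitone α) (hβ : Antitone β) (U V W : Matrix n n R)
    (h : diagonal (fun i => algebraMap R F ϖ ^ γ i) =
      U.map (algebraMap R F) * (diagonal (fun i => algebraMap R F ϖ ^ α i) *
        (V.map (algebraMap R F) * (diagonal (fun i => algebraMap R F ϖ ^ β i) *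
          W.map (algebraMap R F)))))
    {s : Finset n} (hs : IsUpperSet (s : Set n)) :
    ∑ i ∈ s, α i + ∑ i ∈ s, β i ≤ ∑ i ∈ s, γ i := by
  have hsmallest {δ : n → ℤ} (hδ : Antitone δ) (g : s → n) (hg : Function.Injective g) :
      ∑ i ∈ s, δ i ≤ ∑ i, δ (g i) :=
    hδ.sum_le_sum_comp_of_isUpperSet hs (Fintype.card_coe s).symm hg
  have hminors : MinorsMem ϖ s (∑ i ∈ s, α i + (∑ i ∈ s, β i + 0)) _ :=
    ((((minorsMem_map_algebraMap W).diagonal_zpow_mul hϖ (hsmallest hβ)).map_algebraMap_mul hϖ V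
      ).diagonal_zpow_mul hϖ (hsmallest hα)).map_algebraMap_mul hϖ U
  have hdet := hminors Subtype.val Subtype.val
  rw [← h, submatrix_diagonal _ _ Subtype.val_injective, det_diagonal, add_zero] at hdet
  refine le_of_zpow_mem_zpowSpan hϖ hinj hϖu ?_
  rwa [zpow_sum₀ hϖ, ← prod_coe_sort s]

end Minors

theorem WittVector.algebraMap_p_ne_zero (p : ℕ) [Fact p.Prime] (k : Type*) [Field k]
    [CharP k p] : algebraMap (WittVector p k) (FractionRing (WittVector p k)) p ≠ 0 :=
  (map_ne_zero_iff _ (IsFractionRing.injective _ _)).mpr (WittVector.irreducible p).ne_zero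

section HodgePoint

omit [IsAlgClosed κ]

variable {p κ} {n : ℕ}

theorem IsHodgePoint.exists_decomposition {b : Matrix (Fin n) (Fin n) K} {μ : Fin n → ℤ}
    (h : IsHodgePoint p κ b μ) :
    ∃ U V : Matrix (Fin n) (Fin n) 𝕎, IsUnit U.det ∧ IsUnit V.det ∧
      b = U.map (algebraMap 𝕎 K) * diagonal (fun i => algebraMap 𝕎 K p ^ μ i) *
        V.map (algebraMap 𝕎 K) := by
  obtain ⟨-, -, -, ⟨U, hU, rfl⟩, ⟨V, hV, rfl⟩, rfl⟩ := h
  exact ⟨U, V, hU, hV, by simp only [map_natCast]⟩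

theorem IsHodgePoint.exists_det_eq {b : Matrix (Fin n) (Fin n) K} {μ : Fin n → ℤ}
    (h : IsHodgePoint p κ b μ) :
    ∃ u : 𝕎, IsUnit u ∧ b.det = algebraMap 𝕎 K u * algebraMap 𝕎 K p ^ ∑ i, μ i := by
  obtain ⟨U, V, hU, hV, rfl⟩ := h.exists_decomposition
  refine ⟨U.det * V.det, hU.mul hV, ?_⟩
  rw [det_mul, det_mul, det_diagonal, zpow_sum₀ (WittVector.algebraMap_p_ne_zero p κ),
    ← RingHom.mapMatrix_apply, ← RingHom.mapMatrix_apply, ← RingHom.map_det, ← RingHom.map_det,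
    map_mul]
  ring

theorem IsHodgePoint.sum_mul_eq_add {A B : Matrix (Fin n) (Fin n) K} {μA μB μAB : Fin n → ℤ}
    (hA : IsHodgePoint p κ A μA) (hB : IsHodgePoint p κ B μB)
    (hAB : IsHodgePoint p κ (A * B) μAB) :
    ∑ i, μAB i = ∑ i, μA i + ∑ i, μB i := by
  have hp := WittVector.algebraMap_p_ne_zero p κ
  have hinj := IsFractionRing.injective 𝕎 K
  have hpu := (WittVector.irreducible p (k := κ)).not_isUnit
  obtain ⟨u, hu, hdetA⟩ := hA.exists_det_eq
  obtain ⟨v, hv, hdetB⟩ := hB.exists_det_eq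
  obtain ⟨w, hw, hdetAB⟩ := hAB.exists_det_eq
  have h : algebraMap 𝕎 K w * algebraMap 𝕎 K p ^ ∑ i, μAB i =
      algebraMap 𝕎 K (u * v) * algebraMap 𝕎 K p ^ (∑ i, μA i + ∑ i, μB i) := by
    rw [← hdetAB, det_mul, hdetA, hdetB, map_mul, zpow_add₀ hp]
    ring
  exact le_antisymm (le_of_algebraMap_mul_zpow_eq hp hinj hpu (hu.mul hv) h.symm)
    (le_of_algebraMap_mul_zpow_eq hp hinj hpu hw h)

theorem IsHodgePoint.exists_diagonal_eq {A B : Matrix (Fin n) (Fin n) K}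
    {μA μB μAB : Fin n → ℤ} (hA : IsHodgePoint p κ A μA) (hB : IsHodgePoint p κ B μB)
    (hAB : IsHodgePoint p κ (A * B) μAB) :
    ∃ U V W : Matrix (Fin n) (Fin n) 𝕎,
      diagonal (fun i => algebraMap 𝕎 K p ^ μAB i) =
        U.map (algebraMap 𝕎 K) * (diagonal (fun i => algebraMap 𝕎 K p ^ μA i) *
          (V.map (algebraMap 𝕎 K) * (diagonal (fun i => algebraMap 𝕎 K p ^ μB i) *
            W.map (algebraMap 𝕎 K)))) := by
  obtain ⟨U₁, V₁, -, -, hA⟩ := hA.exists_decomposition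
  obtain ⟨U₂, V₂, -, -, hB⟩ := hB.exists_decomposition
  obtain ⟨U, V, hU, hV, hAB⟩ := hAB.exists_decomposition
  refine ⟨U⁻¹ * U₁, V₁ * U₂, V₂ * V⁻¹, ?_⟩
  calc diagonal (fun i => algebraMap 𝕎 K p ^ μAB i)
      = (U⁻¹ * U).map (algebraMap 𝕎 K) * diagonal (fun i => algebraMap 𝕎 K p ^ μAB i) *
          (V * V⁻¹).map (algebraMap 𝕎 K) := by
        rw [nonsing_inv_mul U hU, mul_nonsing_inv V hV,
          Matrix.map_one _ (map_zero _) (map_one _), Matrix.one_mul, Matrix.mul_one]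
    _ = U⁻¹.map (algebraMap 𝕎 K) * (A * B) * V⁻¹.map (algebraMap 𝕎 K) := by
        rw [hAB]
        simp only [Matrix.map_mul, Matrix.mul_assoc]
    _ = _ := by
        rw [hA, hB]
        simp only [Matrix.map_mul, Matrix.mul_assoc]

theorem IsHodgePoint.sum_add_sum_le_sum_mul {A B : Matrix (Fin n) (Fin n) K}
    {μA μB μAB : Fin n → ℤ} (hA : IsHodgePoint p κ A μA) (hB : IsHodgePoint p κ B μB)
    (hAB : IsHodgePoint p κ (A * B) μAB) {s : Finset (Fin n)}
    (hs : IsUpperSet (s : Set (Fin n))) :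
    ∑ i ∈ s, μA i + ∑ i ∈ s, μB i ≤ ∑ i ∈ s, μAB i := by
  obtain ⟨U, V, W, h⟩ := hA.exists_diagonal_eq hB hAB
  exact sum_add_sum_le_of_diagonal_eq (WittVector.algebraMap_p_ne_zero p κ)
    (IsFractionRing.injective 𝕎 K) (WittVector.irreducible p).not_isUnit hA.1 hB.1 U V W h hs

end HodgePoint

theorem statement_6 (n : ℕ) (A B : Matrix (Fin n) (Fin n) K)
    (μA μB μAB : Fin n → ℤ)
    (hμA : IsHodgePoint p κ A μA) (hμB : IsHodgePoint p κ B μB)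
    (hμAB : IsHodgePoint p κ (A * B) μAB) :
    (∀ l, 1 ≤ l → l ≤ n →
      (∑ i : Fin n, if n - l ≤ (i : ℕ) then μA i else 0) +
        (∑ i : Fin n, if n - l ≤ (i : ℕ) then μB i else 0) ≤
      ∑ i : Fin n, if n - l ≤ (i : ℕ) then μAB i else 0) ∧
    (∑ i, μAB i = ∑ i, μA i + ∑ i, μB i) := by
  refine ⟨fun l _ _ => ?_, hμA.sum_mul_eq_add hμB hμAB⟩
  simp only [← sum_filter]
  refine hμA.sum_add_sum_le_sum_mul hμB hμAB fun i j hij hi => ?_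
  simp only [coe_filter, mem_univ, true_and, Set.mem_ofPred_eq] at hi ⊢
  exact hi.trans hij

end
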